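/- Let f : ℝ^d → ℝ be L-smooth, let h : ℝ^d → ℝ be ρ-weakly convex with ρ ≥ 0, set φ = f + h, and let α > 0 satisfy 16αL ≤ 1 and 48αρ ≤ 1. Let n ≥ 1, let x_i, ν_i ∈ ℝ^d for i = 1,…,n, let u_i = prox_h^{α^{-1}}(x_i − α ν_i) and G_i = (1/α)(x_i − u_i), and set x̄ = (1/n)Σ_i x_i, ν̄ = (1/n)Σ_i ν_i, ū = (1/n)Σ_i u_i. Then φ(ū) − φ(x̄) ≤ (9/(16αn)) Σ_{i=1}^n ‖x̄ − x_i‖² + (α/(2n)) Σ_{i=1}^n ‖ν̄ − ν_i‖² + 8α ‖∇f(x̄) − ν̄‖² − (3α/(8n)) Σ_{i=1}^n ‖G_i‖². -/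

import Mathlib

/-! The prox objective `z ↦ h z + ‖z - y‖² / (2α)` is `(1/α - ρ)`-strongly convex, so every `u i`
satisfies a three-point inequality against `x̄`; with Young's inequality, and Jensen's inequality
for `h + (ρ/2)‖·‖²` to pass from the `h (u i)` to `h ū`, this bounds `n (h ū - h x̄)` up to the term
`n ⟪ν̄, x̄ - ū⟫`. The descent lemma for `f`, with Young's inequality against `ν̄`, cancels that term
at the price of `8α ‖∇f x̄ - ν̄‖²` and a multiple of `‖x̄ - ū‖²`, which is absorbed by `∑ ‖G i‖²`
because `x̄ - ū` is the mean of the `α G i`. -/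

open Finset

noncomputable section

def avg {d n : ℕ} (x : Fin n → EuclideanSpace ℝ (Fin d)) : EuclideanSpace ℝ (Fin d) :=
  (n : ℝ)⁻¹ • ∑ i, x i

open Filter Topology RealInnerProductSpace Gradient

theorem norm_add_sq_le_two_mul_add {F : Type*} [SeminormedAddCommGroup F] (p q : F) :
    ‖p + q‖ ^ 2 ≤ 2 * ‖p‖ ^ 2 + 2 * ‖q‖ ^ 2 :=
  (pow_le_pow_left₀ (norm_nonneg _) (norm_add_le p q) 2).trans (add_sq_le.trans_eq (by ring))

section InnerProductSpace

variable {E : Type*} [NormedAddCommGroup E] [InnerProductSpace ℝ E]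

theorem two_mul_real_inner_le_add_mul_sq {ε : ℝ} (hε : 0 < ε) (p q : E) :
    2 * ⟪p, q⟫ ≤ ε * ‖p‖ ^ 2 + ε⁻¹ * ‖q‖ ^ 2 := by
  have := two_mul_le_add_mul_sq (a := ‖p‖) (b := ‖q‖) hε
  nlinarith [real_inner_le_norm p q]

theorem descent_lemma [CompleteSpace E] {f : E → ℝ} {L : ℝ} (hf : Differentiable ℝ f)
    (hL : ∀ x y, ‖∇ f x - ∇ f y‖ ≤ L * ‖x - y‖) (a b : E) :
    f b ≤ f a + ⟪∇ f a, b - a⟫ + L / 2 * ‖b - a‖ ^ 2 := by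
  set v := b - a
  let φ : ℝ → ℝ := fun t => f (a + t • v) - t * ⟪∇ f a, v⟫ - L / 2 * t ^ 2 * ‖v‖ ^ 2
  have hφ : ∀ t, HasDerivAt φ (⟪∇ f (a + t • v) - ∇ f a, v⟫ - L * t * ‖v‖ ^ 2) t := by
    intro t
    have hline : HasDerivAt (fun s : ℝ => a + s • v) v t :=
      ((hasDerivAt_id t).smul_const v).const_add a |>.congr_deriv (one_smul ℝ v)
    have hcomp : HasDerivAt (fun s : ℝ => f (a + s • v)) ⟪∇ f (a + t • v), v⟫ t :=
      (hf _).hasGradientAt.hasFDerivAt.comp_hasDerivAt t hline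
    refine ((hcomp.sub ((hasDerivAt_id t).mul_const ⟪∇ f a, v⟫)).sub
      (((hasDerivAt_pow 2 t).const_mul (L / 2)).mul_const (‖v‖ ^ 2))).congr_deriv ?_
    rw [inner_sub_left]
    push_cast
    ring
  have hφ_nonpos : ∀ t ∈ interior (Set.Ici (0 : ℝ)), deriv φ t ≤ 0 := by
    intro t ht
    rw [interior_Ici, Set.mem_Ioi] at ht
    rw [(hφ t).deriv, sub_nonpos]
    calc ⟪∇ f (a + t • v) - ∇ f a, v⟫ ≤ ‖∇ f (a + t • v) - ∇ f a‖ * ‖v‖ :=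
          real_inner_le_norm _ _
      _ ≤ L * ‖t • v‖ * ‖v‖ := by
          gcongr
          simpa using hL (a + t • v) a
      _ = L * t * ‖v‖ ^ 2 := by rw [norm_smul, Real.norm_of_nonneg ht.le]; ring
  have hanti := antitoneOn_of_deriv_nonpos (convex_Ici 0)
    (fun t _ => (hφ t).continuousAt.continuousWithinAt)
    (fun t _ => (hφ t).differentiableAt.differentiableWithinAt) hφ_nonpos
    Set.self_mem_Ici (Set.mem_Ici.2 zero_le_one) zero_le_one
  simp only [φ, zero_smul, add_zero, one_smul, v, add_sub_cancel] at hanti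
  linarith

theorem descent_lemma_of_gradient_estimate [CompleteSpace E] {f : E → ℝ} {L α : ℝ}
    (hf : Differentiable ℝ f) (hL : ∀ x y, ‖∇ f x - ∇ f y‖ ≤ L * ‖x - y‖) (hα : 0 < α)
    (hαL : 16 * α * L ≤ 1) (X U V : E) :
    f U - f X ≤ -⟪V, X - U⟫ + 8 * α * ‖∇ f X - V‖ ^ 2 + 1 / (16 * α) * ‖X - U‖ ^ 2 := by
  have hdescent := descent_lemma hf hL X U
  rw [← neg_sub X U, inner_neg_right, norm_neg] at hdescent
  have hyoung := two_mul_real_inner_le_add_mul_sq (by positivity : 0 < 16 * α) (V - ∇ f X) (X - U)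
  rw [norm_sub_rev, inner_sub_left] at hyoung
  have hLα : L * ‖X - U‖ ^ 2 ≤ 1 / (16 * α) * ‖X - U‖ ^ 2 :=
    mul_le_mul_of_nonneg_right ((le_div_iff₀ (by positivity)).2 (by linarith)) (by positivity)
  linear_combination hdescent + hyoung / 2 + hLα / 2

theorem StrongConvexOn.add_sq_norm_sub_le_of_isMinOn {s : Set E} {m : ℝ} {f : E → ℝ}
    {u z : E} (hf : StrongConvexOn s m f) (hmin : IsMinOn f s u) (hu : u ∈ s) (hz : z ∈ s) :
    f u + m / 2 * ‖z - u‖ ^ 2 ≤ f z := by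
  have hseg : ∀ t ∈ Set.Ioo (0 : ℝ) 1, f u + (1 - t) * (m / 2 * ‖z - u‖ ^ 2) ≤ f z := by
    rintro t ⟨ht0, ht1⟩
    have hconv := hf.2 hz hu ht0.le (sub_nonneg.2 ht1.le) (add_sub_cancel t 1)
    have hle := hmin (hf.1 hz hu ht0.le (sub_nonneg.2 ht1.le) (add_sub_cancel t 1))
    simp only [smul_eq_mul, Set.mem_ofPred_eq] at hconv hle
    nlinarith
  have hlim : Tendsto (fun t : ℝ => f u + (1 - t) * (m / 2 * ‖z - u‖ ^ 2)) (𝓝[>] 0)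
      (𝓝 (f u + m / 2 * ‖z - u‖ ^ 2)) := by
    refine tendsto_nhdsWithin_of_tendsto_nhds ?_
    simpa using (tendsto_const_nhds (x := f u)).add
      (((tendsto_const_nhds (x := (1 : ℝ))).sub (tendsto_id (x := 𝓝 (0 : ℝ)))).mul
        (tendsto_const_nhds (x := m / 2 * ‖z - u‖ ^ 2)))
  exact le_of_tendsto hlim (Filter.mem_of_superset (Ioo_mem_nhdsGT one_pos) hseg)

theorem ConvexOn.strongConvexOn_add_mul_sq_norm_sub {h : E → ℝ} {ρ : ℝ}
    (hwc : ConvexOn ℝ Set.univ fun z => h z + ρ / 2 * ‖z‖ ^ 2) (c : ℝ) (y : E) :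
    StrongConvexOn Set.univ (2 * c - ρ) fun z => h z + c * ‖z - y‖ ^ 2 := by
  rw [strongConvexOn_iff_convex]
  refine ((hwc.add (((-(2 * c)) • innerₗ E y).convexOn convex_univ)).add_const
    (c * ‖y‖ ^ 2)).congr fun z _ => ?_
  simp only [Pi.add_apply, LinearMap.smul_apply, innerₗ_apply_apply, smul_eq_mul,
    norm_sub_sq_real, real_inner_comm y z]
  ring

theorem ConvexOn.prox_step_le {h : E → ℝ} {ρ α : ℝ}
    (hwc : ConvexOn ℝ Set.univ fun z => h z + ρ / 2 * ‖z‖ ^ 2) (hα : 0 < α) {x ν u : E}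
    (hu : IsMinOn (fun z => h z + 1 / (2 * α) * ‖z - (x - α • ν)‖ ^ 2) Set.univ u) (X V : E) :
    h u ≤ h X + 1 / (2 * α) * ‖X - x‖ ^ 2 + α / 2 * ‖V - ν‖ ^ 2 -
      α / 2 * ‖α⁻¹ • (x - u)‖ ^ 2 + ⟪V, X - u⟫ + ρ / 2 * ‖u - X‖ ^ 2 := by
  obtain ⟨G, rfl⟩ : ∃ G, u = x - α • G := ⟨α⁻¹ • (x - u), by simp [smul_inv_smul₀ hα.ne']⟩
  obtain ⟨a, rfl⟩ : ∃ a, x = X - a := ⟨X - x, by abel⟩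
  have hthree := (hwc.strongConvexOn_add_mul_sq_norm_sub (1 / (2 * α)) (X - a - α • ν)
    ).add_sq_norm_sub_le_of_isMinOn hu (Set.mem_univ _) (Set.mem_univ X)
  have hyoung := two_mul_real_inner_le_add_mul_sq hα (ν - V) (a + α • G)
  have hXy : X - (X - a - α • ν) = a + α • ν := by abel
  have huy : X - a - α • G - (X - a - α • ν) = α • (ν - G) := by rw [smul_sub]; abel
  have hXu : X - (X - a - α • G) = a + α • G := by abel
  have huX : X - a - α • G - X = -(a + α • G) := by abel
  have hG : α⁻¹ • (X - a - (X - a - α • G)) = G := by simp [inv_smul_smul₀ hα.ne']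
  rw [hG]
  simp only [hXy, huy, hXu, huX, sub_sub_cancel, norm_neg, norm_add_sq_real, norm_sub_sq_real,
    norm_smul, inner_add_right, inner_sub_left, real_inner_smul_right,
    Real.norm_of_nonneg hα.le, mul_pow] at hthree hyoung ⊢
  rw [real_inner_comm V ν] at hyoung
  rw [real_inner_comm ν a] at hthree
  have hα' : α ≠ 0 := hα.ne'
  field_simp at hthree hyoung ⊢
  linear_combination hthree + hyoung

section Mean

variable {n : ℕ}

theorem natCast_smul_inv_smul_sum (v : Fin n → E) :
    (n : ℝ) • ((n : ℝ)⁻¹ • ∑ i, v i) = ∑ i, v i := by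
  rcases eq_or_ne n 0 with rfl | hn
  · simp
  · exact smul_inv_smul₀ (Nat.cast_ne_zero.2 hn) _

theorem sum_sq_norm_sub_eq (v : Fin n → E) (z : E) :
    ∑ i, ‖v i - z‖ ^ 2 =
      ∑ i, ‖v i - (n : ℝ)⁻¹ • ∑ j, v j‖ ^ 2 + n * ‖(n : ℝ)⁻¹ • ∑ j, v j - z‖ ^ 2 := by
  set m := (n : ℝ)⁻¹ • ∑ j, v j
  have hcenter : ∑ i, (v i - m) = 0 := by
    rw [sum_sub_distrib, sum_const, card_univ, Fintype.card_fin, ← Nat.cast_smul_eq_nsmul ℝ,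
      natCast_smul_inv_smul_sum, sub_self]
  calc ∑ i, ‖v i - z‖ ^ 2 = ∑ i, (‖v i - m‖ ^ 2 + 2 * ⟪v i - m, m - z⟫ + ‖m - z‖ ^ 2) := by
        refine sum_congr rfl fun i _ => ?_
        rw [← norm_add_sq_real, sub_add_sub_cancel]
    _ = _ := by
        rw [sum_add_distrib, sum_add_distrib, ← mul_sum, ← sum_inner, hcenter, inner_zero_left]
        simp

theorem sum_sq_norm_sub_mean_le (v : Fin n → E) (z : E) :
    ∑ i, ‖v i - (n : ℝ)⁻¹ • ∑ j, v j‖ ^ 2 ≤ ∑ i, ‖v i - z‖ ^ 2 := by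
  rw [sum_sq_norm_sub_eq v z]
  exact le_add_of_nonneg_right (by positivity)

theorem natCast_mul_sq_norm_mean_le (v : Fin n → E) :
    n * ‖(n : ℝ)⁻¹ • ∑ i, v i‖ ^ 2 ≤ ∑ i, ‖v i‖ ^ 2 := by
  simpa using (sum_sq_norm_sub_eq v 0).ge.trans' (le_add_of_nonneg_left (by positivity))

theorem ConvexOn.natCast_mul_map_mean_le {h : E → ℝ} {ρ : ℝ}
    (hwc : ConvexOn ℝ Set.univ fun z => h z + ρ / 2 * ‖z‖ ^ 2) (hn : n ≠ 0) (u : Fin n → E) :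
    n * h ((n : ℝ)⁻¹ • ∑ i, u i) ≤
      ∑ i, h (u i) + ρ / 2 * ∑ i, ‖u i - (n : ℝ)⁻¹ • ∑ j, u j‖ ^ 2 := by
  have hn' : (n : ℝ) ≠ 0 := Nat.cast_ne_zero.2 hn
  have hjensen := hwc.map_sum_le (t := univ) (w := fun _ => (n : ℝ)⁻¹) (p := u)
    (fun _ _ => by positivity) (by simp [hn']) (fun _ _ => Set.mem_univ _)
  have hvar := sum_sq_norm_sub_eq u 0
  simp only [← smul_sum, smul_eq_mul, ← mul_sum, sum_add_distrib, sub_zero] at hjensen hvar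
  have := mul_le_mul_of_nonneg_left hjensen (Nat.cast_nonneg n)
  rw [← mul_assoc, mul_inv_cancel₀ hn', one_mul, hvar] at this
  linarith

theorem ConvexOn.sum_prox_step_le {h : E → ℝ} {ρ α : ℝ}
    (hwc : ConvexOn ℝ Set.univ fun z => h z + ρ / 2 * ‖z‖ ^ 2) (hρ : 0 ≤ ρ) (hα : 0 < α)
    (hαρ : 32 * α * ρ ≤ 1) (hn : n ≠ 0) {x ν u : Fin n → E}
    (hu : ∀ i, IsMinOn (fun z => h z + 1 / (2 * α) * ‖z - (x i - α • ν i)‖ ^ 2) Set.univ (u i))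
    (X V : E) :
    n * (h ((n : ℝ)⁻¹ • ∑ i, u i) - h X) ≤
      9 / (16 * α) * ∑ i, ‖X - x i‖ ^ 2 + α / 2 * ∑ i, ‖V - ν i‖ ^ 2 -
      7 * α / 16 * ∑ i, ‖α⁻¹ • (x i - u i)‖ ^ 2 + n * ⟪V, X - (n : ℝ)⁻¹ • ∑ i, u i⟫ := by
  set U := (n : ℝ)⁻¹ • ∑ i, u i
  have hsplit : ∀ i, ‖u i - X‖ ^ 2 ≤ 2 * ‖X - x i‖ ^ 2 + 2 * α ^ 2 * ‖α⁻¹ • (x i - u i)‖ ^ 2 := by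
    intro i
    have hdecomp : u i - X = -((X - x i) + α • α⁻¹ • (x i - u i)) := by
      rw [smul_inv_smul₀ hα.ne']; abel
    have hscale : α ^ 2 * ‖α⁻¹ • (x i - u i)‖ ^ 2 = ‖α • α⁻¹ • (x i - u i)‖ ^ 2 := by
      rw [norm_smul α, Real.norm_of_nonneg hα.le, mul_pow]
    rw [hdecomp, norm_neg, mul_assoc, hscale]
    exact norm_add_sq_le_two_mul_add _ _
  have hinner : ∑ i, ⟪V, X - u i⟫ = n * ⟪V, X - U⟫ := by
    rw [← inner_sum, sum_sub_distrib, sum_const, card_univ, Fintype.card_fin,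
      ← Nat.cast_smul_eq_nsmul ℝ, ← natCast_smul_inv_smul_sum u, ← smul_sub, real_inner_smul_right]
  have hsteps := sum_le_sum fun i (_ : i ∈ univ) => hwc.prox_step_le hα (hu i) X V
  simp only [sum_add_distrib, sum_sub_distrib, ← mul_sum, sum_const, card_univ, Fintype.card_fin,
    nsmul_eq_mul, hinner] at hsteps
  have hjensen := hwc.natCast_mul_map_mean_le hn u
  have hvar := mul_le_mul_of_nonneg_left (sum_sq_norm_sub_mean_le u X) hρ
  have hspread := mul_le_mul_of_nonneg_left (sum_le_sum fun i (_ : i ∈ univ) => hsplit i) hρ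
  simp only [sum_add_distrib, ← mul_sum] at hspread
  have hcoef₁ : (1 / (2 * α) + 2 * ρ) * ∑ i, ‖X - x i‖ ^ 2 ≤ 9 / (16 * α) * ∑ i, ‖X - x i‖ ^ 2 := by
    refine mul_le_mul_of_nonneg_right ?_ (by positivity)
    have hρα : 2 * ρ ≤ 1 / (16 * α) := (le_div_iff₀ (by positivity)).2 (by linarith)
    have : 1 / (2 * α) + 1 / (16 * α) = 9 / (16 * α) := by field_simp; norm_num
    linarith
  have hcoef₃ : 2 * ρ * α ^ 2 * ∑ i, ‖α⁻¹ • (x i - u i)‖ ^ 2 ≤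
      α / 16 * ∑ i, ‖α⁻¹ • (x i - u i)‖ ^ 2 := by
    refine mul_le_mul_of_nonneg_right ?_ (by positivity)
    nlinarith
  linarith

end Mean

end InnerProductSpace

/-- One-step descent of the composite objective along the
averaged proximal update. -/
theorem composite_descent_avg {d n : ℕ} (hn : 1 ≤ n) (L ρ α : ℝ) (hρ : 0 ≤ ρ)
    (f : EuclideanSpace ℝ (Fin d) → ℝ) (hdiff : Differentiable ℝ f)
    (hsmooth : ∀ x y, ‖gradient f x - gradient f y‖ ≤ L * ‖x - y‖)
    (h : EuclideanSpace ℝ (Fin d) → ℝ)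
    (hwc : ConvexOn ℝ Set.univ (fun z => h z + (ρ / 2) * ‖z‖ ^ 2))
    (hα : 0 < α) (hαL : 16 * α * L ≤ 1) (hαρ : 48 * α * ρ ≤ 1)
    (x ν u : Fin n → EuclideanSpace ℝ (Fin d))
    (hu : ∀ i, ∀ z, h (u i) + (1 / (2 * α)) * ‖u i - (x i - α • ν i)‖ ^ 2 ≤
      h z + (1 / (2 * α)) * ‖z - (x i - α • ν i)‖ ^ 2) :
    (f (avg u) + h (avg u)) - (f (avg x) + h (avg x)) ≤
      (9 / (16 * α * n)) * ∑ i, ‖avg x - x i‖ ^ 2 +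
      (α / (2 * n)) * ∑ i, ‖avg ν - ν i‖ ^ 2 +
      8 * α * ‖gradient f (avg x) - avg ν‖ ^ 2 -
      (3 * α / (8 * n)) * ∑ i, ‖α⁻¹ • (x i - u i)‖ ^ 2 := by
  have hn0 : (0 : ℝ) < n := by exact_mod_cast hn
  have hf := descent_lemma_of_gradient_estimate hdiff hsmooth hα hαL (avg x) (avg u) (avg ν)
  have hh := hwc.sum_prox_step_le hρ hα (by nlinarith) (by omega) (fun i z _ => hu i z)
    (avg x) (avg ν)
  have hgap : n * ‖avg x - avg u‖ ^ 2 ≤ α ^ 2 * ∑ i, ‖α⁻¹ • (x i - u i)‖ ^ 2 := by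
    have hmean : avg x - avg u = (n : ℝ)⁻¹ • ∑ i, (x i - u i) := by
      simp only [avg, sum_sub_distrib, smul_sub]
    simpa [hmean, mul_sum, norm_smul, mul_pow, abs_of_pos hα, hα.ne']
      using natCast_mul_sq_norm_mean_le (fun i => x i - u i)
  have hgap' : 1 / (16 * α) * (n * ‖avg x - avg u‖ ^ 2) ≤
      α / 16 * ∑ i, ‖α⁻¹ • (x i - u i)‖ ^ 2 := by
    calc _ ≤ 1 / (16 * α) * (α ^ 2 * ∑ i, ‖α⁻¹ • (x i - u i)‖ ^ 2) := by gcongr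
      _ = _ := by field_simp
  change (n : ℝ) * (h (avg u) - h (avg x)) ≤ _ + n * ⟪avg ν, avg x - avg u⟫ at hh
  rw [← mul_le_mul_iff_of_pos_left hn0]
  linear_combination (norm := skip) (n : ℝ) * hf + hh + hgap'
  exact le_of_eq (by field_simp; ring)

end
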